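/- Let d ∈ {1,2,3} and let L ⊂ ℂ be a line containing one of the sides of the boundary of U_d (for d = 1 these are the lines Re w = ±1/2 and Im w = ±1/2; for d = 2 the lines Re w = ±1/2 and Im w = ±√2/2; for d = 3 the six lines ω₃^k·{w : Re w = 1/2}, k = 0,…,5, bounding the hexagon U₃). Let z ∈ ℚ(√(-d)) and let ẑ be the reflection of z across L. Then ẑ ∈ ℚ(√(-d)); moreover, if z = P/Q and ẑ = P'/Q' with P,Q coprime and P',Q' coprime in ℤ[ω_d], then |Q'| = |Q| (so the Ford spheres of z and ẑ have the same radius). -/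

import Mathlib

/-- `ω_d`: the generator of the ring of integers of `ℚ(√(-d))`. -/
noncomputable def omegaD (d : ℕ) : ℂ :=
  if d % 4 = 3 then (1 + Complex.I * Real.sqrt d) / 2 else Complex.I * Real.sqrt d

/-- The ring of integers `ℤ[ω_d]` of `ℚ(√(-d))`, as a subset of `ℂ`. -/
def ringInt (d : ℕ) : Set ℂ := {z | ∃ a b : ℤ, z = (a : ℂ) + (b : ℂ) * omegaD d}

/-- `p` and `q` are coprime in `ℤ[ω_d]`. -/
def CoprimeIn (d : ℕ) (p q : ℂ) : Prop :=
  ∃ u v : ℂ, u ∈ ringInt d ∧ v ∈ ringInt d ∧ u * p + v * q = 1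

/-- `x` is an element of the field `ℚ(√(-d)) ⊆ ℂ`. -/
def inK (d : ℕ) (x : ℂ) : Prop :=
  ∃ p q : ℂ, p ∈ ringInt d ∧ q ∈ ringInt d ∧ q ≠ 0 ∧ x = p / q

/-- The point `p/q` of `ℂ ∪ {∞}`, with `p/0 = ∞`. -/
noncomputable def divC (p q : ℂ) : OnePoint ℂ :=
  if q = 0 then OnePoint.infty else ((p / q : ℂ) : OnePoint ℂ)

/-- Two points of `ℚ(√(-d)) ∪ {∞}` are Farey neighbours (joined by an edge of
the Farey graph `E_d`) if they have coprime representations `p₁/q₁`, `p₂/q₂`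
with `|p₁q₂ − p₂q₁| = 1`. -/
def FareyAdj (d : ℕ) (x y : OnePoint ℂ) : Prop :=
  ∃ p₁ q₁ p₂ q₂ : ℂ, p₁ ∈ ringInt d ∧ q₁ ∈ ringInt d ∧ p₂ ∈ ringInt d ∧ q₂ ∈ ringInt d ∧
    CoprimeIn d p₁ q₁ ∧ CoprimeIn d p₂ q₂ ∧ x = divC p₁ q₁ ∧ y = divC p₂ q₂ ∧
    ‖p₁ * q₂ - p₂ * q₁‖ = 1

/-- `f 0 → f 1 → ⋯ → f n` is a walk (of length `n`) in the Farey graph `E_d`. -/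
def IsWalk (d n : ℕ) (f : ℕ → OnePoint ℂ) : Prop := ∀ k, k < n → FareyAdj d (f k) (f (k + 1))

/-- `f 0 → ⋯ → f n` is a geodesic path in `E_d`: a walk of minimal length
among all walks with the same endpoints. -/
def IsGeodesicWalk (d n : ℕ) (f : ℕ → OnePoint ℂ) : Prop :=
  IsWalk d n f ∧ ∀ (m : ℕ) (g : ℕ → OnePoint ℂ), IsWalk d m g → g 0 = f 0 → g m = f n → n ≤ m

/-- Numerators of the convergents of `[a₁, a₂, …]` (`a 0` is unused):
`p₀ = 0`, `p₁ = 1`, `p_k = a_k p_{k−1} + p_{k−2}`. -/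
noncomputable def cfP (a : ℕ → ℂ) : ℕ → ℂ
  | 0 => 0
  | 1 => 1
  | (k + 2) => a (k + 2) * cfP a (k + 1) + cfP a k

/-- Denominators of the convergents of `[a₁, a₂, …]`:
`q₀ = 1`, `q₁ = a₁`, `q_k = a_k q_{k−1} + q_{k−2}`. -/
noncomputable def cfQ (a : ℕ → ℂ) : ℕ → ℂ
  | 0 => 1
  | 1 => a 1
  | (k + 2) => a (k + 2) * cfQ a (k + 1) + cfQ a k

/-- The walk `∞ → p₀/q₀ = 0 → p₁/q₁ → ⋯` along the convergents of `[a₁, a₂, …]`. -/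
noncomputable def cfWalk (a : ℕ → ℂ) : ℕ → OnePoint ℂ :=
  fun k => if k = 0 then OnePoint.infty else divC (cfP a (k - 1)) (cfQ a (k - 1))

/-- The lines containing the sides of `∂U_d`, parametrized by a unit normal
direction `u` and an offset `c`: the line is `{z : Re(conj(u)·z) = c}`.
For `d = 1` these are `Re w = ±1/2`, `Im w = ±1/2`; for `d = 2` the lines
`Re w = ±1/2`, `Im w = ±√2/2`; for `d = 3` the six lines
`ω₃^k·{w : Re w = 1/2}`, `k = 0,…,5`. -/
noncomputable def boundaryLineParams (d : ℕ) : Set (ℂ × ℝ) :=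
  if d = 1 then {((1 : ℂ), (1 / 2 : ℝ)), (1, -(1 / 2)), (Complex.I, 1 / 2), (Complex.I, -(1 / 2))}
  else if d = 2 then
    {((1 : ℂ), (1 / 2 : ℝ)), (1, -(1 / 2)),
      (Complex.I, Real.sqrt 2 / 2), (Complex.I, -(Real.sqrt 2 / 2))}
  else {p : ℂ × ℝ | ∃ k : ℕ, k < 6 ∧ p = (omegaD 3 ^ k, (1 / 2 : ℝ))}

/-!
The reflection across `L = {z : Re(conj(u)·z) = c}` is `z ↦ t - s·conj z` with `t = 2cu` and
`s = u²`. For every side of `∂U_d`, `t` lies in `ℤ[ω_d]` and `s` is a unit of `ℤ[ω_d]`. Since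
`ℤ[ω_d]` is stable under conjugation, `P/Q` is sent to `(t·conj Q - s·conj P)/conj Q`, and this
is again a fraction in lowest terms. Reduced denominators of the same point divide each other,
and `‖·‖² = normSq` takes integer values on `ℤ[ω_d]`, so they have the same absolute value, which
is `‖conj Q‖ = ‖Q‖`.
-/

open ComplexConjugate

lemma omegaD_add_conj_and_mul_conj (d : ℕ) :
    ∃ T N : ℤ, omegaD d + conj (omegaD d) = T ∧ omegaD d * conj (omegaD d) = N := by
  have hsqrt : ((Real.sqrt d : ℝ) : ℂ) ^ 2 = d := by
    rw [← Complex.ofReal_pow, Real.sq_sqrt (Nat.cast_nonneg d)]; simp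
  by_cases hd : d % 4 = 3
  · obtain ⟨q, hq⟩ : ∃ q : ℕ, d = 4 * q + 3 := ⟨d / 4, by omega⟩
    have hd4 : (d : ℂ) = 4 * q + 3 := by exact_mod_cast hq
    refine ⟨1, q + 1, ?_, ?_⟩ <;>
      simp only [omegaD, if_pos hd, map_div₀, map_add, map_mul, map_one, Complex.conj_I,
        Complex.conj_ofReal, map_ofNat] <;> push_cast
    · ring
    · linear_combination (-((Real.sqrt d : ℝ) : ℂ) ^ 2 / 4) * Complex.I_sq + hsqrt / 4 + hd4 / 4
  · refine ⟨0, d, ?_, ?_⟩ <;>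
      simp only [omegaD, if_neg hd, map_mul, Complex.conj_I, Complex.conj_ofReal] <;> push_cast
    · ring
    · linear_combination (-((Real.sqrt d : ℝ) : ℂ) ^ 2) * Complex.I_sq + hsqrt

section RingInt

variable {d : ℕ} {x y : ℂ}

lemma omegaD_mem_ringInt : omegaD d ∈ ringInt d := ⟨0, 1, by simp⟩

lemma add_mem_ringInt (hx : x ∈ ringInt d) (hy : y ∈ ringInt d) : x + y ∈ ringInt d := by
  obtain ⟨a, b, rfl⟩ := hx
  obtain ⟨a', b', rfl⟩ := hy
  exact ⟨a + a', b + b', by push_cast; ring⟩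

lemma neg_mem_ringInt (hx : x ∈ ringInt d) : -x ∈ ringInt d := by
  obtain ⟨a, b, rfl⟩ := hx
  exact ⟨-a, -b, by push_cast; ring⟩

lemma mul_mem_ringInt (hx : x ∈ ringInt d) (hy : y ∈ ringInt d) : x * y ∈ ringInt d := by
  obtain ⟨T, N, hT, hN⟩ := omegaD_add_conj_and_mul_conj d
  obtain ⟨a, b, rfl⟩ := hx
  obtain ⟨a', b', rfl⟩ := hy
  -- `ω` is a root of `X² - T X + N`
  refine ⟨a * a' - N * b * b', a * b' + a' * b + T * b * b', ?_⟩
  push_cast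
  linear_combination (b * b' : ℂ) * (omegaD d * hT - hN)

def ringIntSubring (d : ℕ) : Subring ℂ where
  carrier := ringInt d
  mul_mem' := mul_mem_ringInt
  one_mem' := ⟨1, 0, by simp⟩
  add_mem' := add_mem_ringInt
  zero_mem' := ⟨0, 0, by simp⟩
  neg_mem' := neg_mem_ringInt

lemma mem_ringIntSubring : x ∈ ringIntSubring d ↔ x ∈ ringInt d := Iff.rfl

lemma conj_mem_ringInt (hx : x ∈ ringInt d) : conj x ∈ ringInt d := by
  obtain ⟨T, N, hT, -⟩ := omegaD_add_conj_and_mul_conj d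
  obtain ⟨a, b, rfl⟩ := hx
  refine ⟨a + b * T, -b, ?_⟩
  simp only [map_add, map_mul, map_intCast]
  push_cast
  linear_combination (b : ℂ) * hT

lemma exists_intCast_eq_normSq (hx : x ∈ ringInt d) : ∃ n : ℤ, Complex.normSq x = n := by
  obtain ⟨T, N, hT, hN⟩ := omegaD_add_conj_and_mul_conj d
  obtain ⟨a, b, rfl⟩ := hx
  refine ⟨a ^ 2 + T * a * b + N * b ^ 2, Complex.ofReal_injective ?_⟩
  rw [Complex.normSq_eq_conj_mul_self]
  simp only [map_add, map_mul, map_intCast]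
  push_cast
  linear_combination (a * b : ℂ) * hT + (b ^ 2 : ℂ) * hN

lemma one_le_norm_of_mem_ringInt (hx : x ∈ ringInt d) (hx0 : x ≠ 0) : 1 ≤ ‖x‖ := by
  obtain ⟨n, hn⟩ := exists_intCast_eq_normSq hx
  have hn0 : (0 : ℝ) < n := hn ▸ Complex.normSq_pos.mpr hx0
  rw [← one_le_sq_iff₀ (norm_nonneg x), Complex.sq_norm, hn]
  exact_mod_cast (Int.cast_pos.mp hn0 : 0 < n)

end RingInt

namespace CoprimeIn

variable {d : ℕ} {P Q : ℂ}

lemma map_conj (h : CoprimeIn d P Q) : CoprimeIn d (conj P) (conj Q) := by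
  obtain ⟨a, b, ha, hb, hab⟩ := h
  refine ⟨conj a, conj b, conj_mem_ringInt ha, conj_mem_ringInt hb, ?_⟩
  simpa only [map_add, map_mul, map_one] using congrArg (starRingEnd ℂ) hab

lemma mul_sub_mul_left {t s s' : ℂ} (ht : t ∈ ringInt d) (hs' : s' ∈ ringInt d)
    (hss' : s' * s = 1) (h : CoprimeIn d P Q) : CoprimeIn d (t * Q - s * P) Q := by
  obtain ⟨a, b, ha, hb, hab⟩ := h
  have has' := mul_mem_ringInt ha hs'
  refine ⟨-(a * s'), b + a * s' * t, neg_mem_ringInt has',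
    add_mem_ringInt hb (mul_mem_ringInt has' ht), ?_⟩
  linear_combination hab + a * P * hss'

lemma exists_mul_eq_of_mul_eq_mul {P' Q' : ℂ} (h : CoprimeIn d P Q) (hP' : P' ∈ ringInt d)
    (hQ' : Q' ∈ ringInt d) (hcross : P * Q' = P' * Q) : ∃ w ∈ ringInt d, Q' = Q * w := by
  obtain ⟨a, b, ha, hb, hab⟩ := h
  exact ⟨a * P' + b * Q', add_mem_ringInt (mul_mem_ringInt ha hP') (mul_mem_ringInt hb hQ'),
    by linear_combination a * hcross - Q' * hab⟩

end CoprimeIn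

lemma norm_le_norm_of_eq_mul {d : ℕ} {Q Q' w : ℂ} (hw : w ∈ ringInt d) (hQ' : Q' = Q * w)
    (hQ'0 : Q' ≠ 0) : ‖Q‖ ≤ ‖Q'‖ := by
  subst hQ'
  rw [norm_mul]
  exact le_mul_of_one_le_right (norm_nonneg Q)
    (one_le_norm_of_mem_ringInt hw (right_ne_zero_of_mul hQ'0))

lemma norm_eq_norm_of_div_eq_div {d : ℕ} {P Q P' Q' : ℂ} (hP : P ∈ ringInt d)
    (hQ : Q ∈ ringInt d) (hP' : P' ∈ ringInt d) (hQ' : Q' ∈ ringInt d) (hQ0 : Q ≠ 0)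
    (hQ'0 : Q' ≠ 0) (h : CoprimeIn d P Q) (h' : CoprimeIn d P' Q') (heq : P / Q = P' / Q') :
    ‖Q‖ = ‖Q'‖ := by
  have hcross : P * Q' = P' * Q := (div_eq_div_iff hQ0 hQ'0).mp heq
  obtain ⟨w, hw, hQ'w⟩ := h.exists_mul_eq_of_mul_eq_mul hP' hQ' hcross
  obtain ⟨w', hw', hQw'⟩ := h'.exists_mul_eq_of_mul_eq_mul hP hQ hcross.symm
  exact le_antisymm (norm_le_norm_of_eq_mul hw hQ'w hQ'0) (norm_le_norm_of_eq_mul hw' hQw' hQ0)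

lemma reflection_coeffs_mem_ringInt {d : ℕ} (hd : d ∈ ({1, 2, 3} : Set ℕ)) {u : ℂ} {c : ℝ}
    (hL : (u, c) ∈ boundaryLineParams d) :
    2 * (c : ℂ) * u ∈ ringInt d ∧ u ^ 2 ∈ ringInt d ∧ ‖u‖ = 1 := by
  have hω : omegaD d ∈ ringIntSubring d := omegaD_mem_ringInt
  rcases hd with rfl | rfl | rfl
  · rw [show omegaD 1 = Complex.I by simp [omegaD]] at hω
    simp only [boundaryLineParams] at hL
    simp only [← mem_ringIntSubring]
    rcases hL with ⟨rfl, rfl⟩ | ⟨rfl, rfl⟩ | ⟨rfl, rfl⟩ | ⟨rfl, rfl⟩ <;> norm_num [hω]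
  · rw [show omegaD 2 = 2 * (√2 / 2 : ℂ) * Complex.I by simp [omegaD]; ring] at hω
    simp only [boundaryLineParams] at hL
    simp only [← mem_ringIntSubring]
    rcases hL with ⟨rfl, rfl⟩ | ⟨rfl, rfl⟩ | ⟨rfl, rfl⟩ | ⟨rfl, rfl⟩ <;> norm_num [hω]
  · have hnorm : ‖omegaD 3‖ = 1 := by
      rw [← pow_eq_one_iff_of_nonneg (norm_nonneg _) two_ne_zero, Complex.sq_norm,
        Complex.normSq_apply]
      norm_num [omegaD, Complex.div_re, Complex.div_im]
      ring_nf
      norm_num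
    simp only [boundaryLineParams] at hL
    obtain ⟨k, -, rfl, rfl⟩ := hL
    have hωk : omegaD 3 ^ k ∈ ringIntSubring 3 := pow_mem hω k
    exact ⟨by norm_num; exact hωk, pow_mem hωk 2, by rw [norm_pow, hnorm, one_pow]⟩

/-- Let `d ∈ {1,2,3}` and let `L = {z : Re(conj(u)z) = c}` be
a line containing a side of `∂U_d`. For `z ∈ ℚ(√(-d))`, the reflection
`ẑ = 2cu − u²·conj(z)` of `z` across `L` again lies in `ℚ(√(-d))`, and if
`z = P/Q`, `ẑ = P'/Q'` in coprime lowest terms then `|Q'| = |Q|` (so the Ford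
spheres of `z` and `ẑ` have the same radius). -/
theorem reflection_preserves_field_and_denominator (d : ℕ) (hd : d ∈ ({1, 2, 3} : Set ℕ))
    (u : ℂ) (c : ℝ) (hL : (u, c) ∈ boundaryLineParams d)
    (z : ℂ) (hz : inK d z) :
    inK d (2 * (c : ℂ) * u - u ^ 2 * (starRingEnd ℂ) z) ∧
    ∀ P Q P' Q' : ℂ, P ∈ ringInt d → Q ∈ ringInt d → Q ≠ 0 → CoprimeIn d P Q →
      z = P / Q →
      P' ∈ ringInt d → Q' ∈ ringInt d → Q' ≠ 0 → CoprimeIn d P' Q' →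
      2 * (c : ℂ) * u - u ^ 2 * (starRingEnd ℂ) z = P' / Q' →
      ‖Q'‖ = ‖Q‖ := by
  obtain ⟨ht, hs, hu⟩ := reflection_coeffs_mem_ringInt hd hL
  have hunit : conj (u ^ 2) * u ^ 2 = 1 := by
    rw [Complex.conj_mul', norm_pow, hu]; norm_num
  have hreflect : ∀ p q : ℂ, q ≠ 0 → 2 * (c : ℂ) * u - u ^ 2 * conj (p / q) =
      (2 * c * u * conj q - u ^ 2 * conj p) / conj q := by
    intro p q hq
    have : conj q ≠ 0 := (map_ne_zero _).mpr hq
    rw [map_div₀]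
    field_simp
  have hnum {p q : ℂ} (hp : p ∈ ringInt d) (hq : q ∈ ringInt d) :
      2 * c * u * conj q - u ^ 2 * conj p ∈ ringInt d :=
    (ringIntSubring d).sub_mem (mul_mem_ringInt ht (conj_mem_ringInt hq))
      (mul_mem_ringInt hs (conj_mem_ringInt hp))
  refine ⟨?_, fun P Q P' Q' hP hQ hQ0 hPQ hzPQ hP' hQ' hQ'0 hPQ' hzPQ' => ?_⟩
  · obtain ⟨p, q, hp, hq, hq0, rfl⟩ := hz
    exact ⟨_, _, hnum hp hq, conj_mem_ringInt hq, (map_ne_zero _).mpr hq0, hreflect p q hq0⟩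
  · rw [← Complex.norm_conj Q]
    refine (norm_eq_norm_of_div_eq_div (hnum hP hQ) (conj_mem_ringInt hQ) hP' hQ'
      ((map_ne_zero _).mpr hQ0) hQ'0 ?_ hPQ' (by rw [← hzPQ', hzPQ, hreflect P Q hQ0])).symm
    exact hPQ.map_conj.mul_sub_mul_left ht (conj_mem_ringInt hs) hunit
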